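/- arXiv:1907.04130 — 2 statements merged into one kernel-verified Lean document; each statement's English description precedes it below -/
import Mathlib

section
/- Let q > 1 and let k'₁, k''₁, k₂, λ₁, λ₂, μ₂ be positive real constants with μ₂ > λ₂. Set S = k'₁(μ₂−λ₂)k₂/(k''₁λ₁²) and K = 9k''₁λ₁²/7. Then there exist Ĉ, Â > 0 and an integer n₀ ≥ 1 (depending on k'₁, k''₁, k₂, λ₁, λ₂, μ₂, q) such that for every integer n ≥ n₀ and every real x > 1: x^n · exp( −(k''₁λ₁²/(2 log q)) log²(x) + (k'₁(μ₂−λ₂)k₂/log q) · log(x) · log(log(x)) ) ≤ Ĉ Â^n (n!)^S q^{n(n+1)/K}. -/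
open Complex MeasureTheory Set Metric Filter

noncomputable section

/-- Unbounded open sector with vertex at the origin, bisecting direction `d`,
half-opening `a`. -/
def uSector (d a : ℝ) : Set ℂ :=
  {z : ℂ | ∃ r θ : ℝ, 0 < r ∧ |θ - d| < a ∧ z = (r : ℂ) * Complex.exp ((θ : ℂ) * Complex.I)}

/-- Bounded open sector with vertex at the origin. -/
def bSector (d a R : ℝ) : Set ℂ :=
  {z : ℂ | ∃ r θ : ℝ, 0 < r ∧ r < R ∧ |θ - d| < a ∧
    z = (r : ℂ) * Complex.exp ((θ : ℂ) * Complex.I)}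

/-- Horizontal strip `H_b`. -/
def HStrip (b : ℝ) : Set ℂ := {z : ℂ | |z.im| < b}

/-- Jacobi theta function of order `k`: `Θ_{q^{1/k}}(x) = Σ_{n ∈ ℤ} q^{-n(n-1)/(2k)} x^n`. -/
def Theta (q : ℝ) (k : ℕ) (x : ℂ) : ℂ :=
  ∑' n : ℤ, ((q ^ (-((n : ℝ) * ((n : ℝ) - 1)) / (2 * (k : ℝ))) : ℝ) : ℂ) * x ^ n

/-- The constant `π_{q^{1/k}} = (log q / k) Π_{n ≥ 0} (1 - q^{-(n+1)/k})⁻¹`. -/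
def piq (q : ℝ) (k : ℕ) : ℝ :=
  (Real.log q / (k : ℝ)) * ∏' n : ℕ, (1 - q ^ (-((n : ℝ) + 1) / (k : ℝ)))⁻¹

/-- `∫_{L_γ} g(u) du/u`, where `L_γ` is the ray of argument `γ`. -/
def rayIntegral (γ : ℝ) (g : ℂ → ℂ) : ℂ :=
  ∫ r in Ioi (0 : ℝ), g ((r : ℂ) * Complex.exp ((γ : ℂ) * Complex.I)) / (r : ℂ)

/-- Banach-valued q-Laplace transform of order `k` in direction `γ`. -/
def qLaplace (𝔼 : Type*) [NormedAddCommGroup 𝔼] [NormedSpace ℂ 𝔼]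
    (q : ℝ) (k : ℕ) (γ : ℝ) (f : ℂ → 𝔼) (T : ℂ) : 𝔼 :=
  (1 / (piq q k : ℂ)) •
    ∫ r in Ioi (0 : ℝ),
      ((Theta q k (((r : ℂ) * Complex.exp ((γ : ℂ) * Complex.I)) / T))⁻¹ / (r : ℂ)) •
        f ((r : ℂ) * Complex.exp ((γ : ℂ) * Complex.I))

/-- The domain `𝓡_{γ,δ̃}`. -/
def RegionR (γ δt : ℝ) : Set ℂ :=
  {T : ℂ | T ≠ 0 ∧ ∀ r : ℝ, 0 ≤ r →
    δt < ‖1 + (r : ℂ) * Complex.exp ((γ : ℂ) * Complex.I) / T‖}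

/-- `U_γ(T₁,T₂,m) = (1/π_{q^{1/k₁}}) ∫_{L_γ} ω(u,m) Θ(u/T₁)⁻¹ e^{-u/T₂^{k₂}} du/u`. -/
def Ugamma (q : ℝ) (k₁ k₂ : ℕ) (γ : ℝ) (ω : ℂ → ℝ → ℂ) (T₁ T₂ : ℂ) (m : ℝ) : ℂ :=
  (1 / (piq q k₁ : ℂ)) *
    rayIntegral γ fun u => ω u m / Theta q k₁ (u / T₁) * Complex.exp (-(u / T₂ ^ k₂))

/-- The weight of the space `E_{(β,μ)}`. -/
def Eweight (β μ : ℝ) (m : ℝ) : ℝ := (1 + |m|) ^ μ * Real.exp (β * |m|)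

/-- Membership in `E_{(β,μ)}`. -/
def memE (β μ : ℝ) (h : ℝ → ℂ) : Prop :=
  Continuous h ∧ ∃ C : ℝ, ∀ m : ℝ, Eweight β μ m * ‖h m‖ ≤ C

/-- Norm of `E_{(β,μ)}`. -/
def Enorm (β μ : ℝ) (h : ℝ → ℂ) : ℝ := ⨆ m : ℝ, Eweight β μ m * ‖h m‖

/-- The weight of the space `qExp^d_{(k,β,μ,α)}`. -/
def qW (k β μ α q δ : ℝ) (τ : ℂ) (m : ℝ) : ℝ :=
  Eweight β μ m *
    Real.exp (-(k * Real.log (‖τ‖ + δ) ^ 2) / (2 * Real.log q)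
      - α * Real.log (‖τ‖ + δ))

/-- Membership in `qExp^d_{(k,β,μ,α)}` (with sector `S` and radius `ρ`). -/
def memqExp (k β μ α q δ ρ : ℝ) (S : Set ℂ) (f : ℂ → ℝ → ℂ) : Prop :=
  ContinuousOn (fun p : ℂ × ℝ => f p.1 p.2) ((S ∪ closedBall 0 ρ) ×ˢ (univ : Set ℝ)) ∧
  (∀ m : ℝ, DifferentiableOn ℂ (fun τ => f τ m) (S ∪ ball 0 ρ)) ∧
  ∃ C : ℝ, ∀ τ ∈ S ∪ closedBall (0 : ℂ) ρ, ∀ m : ℝ,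
    qW k β μ α q δ τ m * ‖f τ m‖ ≤ C

/-- Norm of `qExp^d_{(k,β,μ,α)}`. -/
def qNorm (k β μ α q δ ρ : ℝ) (S : Set ℂ) (f : ℂ → ℝ → ℂ) : ℝ :=
  sSup {r : ℝ | ∃ τ ∈ S ∪ closedBall (0 : ℂ) ρ, ∃ m : ℝ,
    r = qW k β μ α q δ τ m * ‖f τ m‖}

/-- Good covering of `ℂ*`. -/
structure GoodCovering (ε₀ : ℝ) {ι : ℕ} (E : Fin ι → Set ℂ) : Prop where
  two_le : 2 ≤ ι
  sect : ∀ h, ∃ d a R, 0 < a ∧ 0 < R ∧ E h = bSector d a R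
  subset : ∀ h, E h ⊆ ball (0 : ℂ) ε₀ \ {0}
  inter : ∀ j₁ j₂ : Fin ι, E j₁ ∩ E j₂ = ∅ ↔
    ¬((j₁ : ℕ) = j₂ ∨ ((j₁ : ℕ) + 1) % ι = j₂ ∨ ((j₂ : ℕ) + 1) % ι = j₁)
  cover : ∃ U ∈ nhds (0 : ℂ), (⋃ h, E h) = U \ {0}

/-- Cyclic successor in `Fin ι`. -/
def cyc {ι : ℕ} (h : Fin ι) : Fin ι := ⟨((h : ℕ) + 1) % ι, Nat.mod_lt _ h.pos⟩

/-- `f` admits `Σ c_n ε^n` as `((q,k);s)`-Gevrey asymptotic expansion on the sector `V`. -/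
def qksGevrey {𝔽 : Type*} [NormedAddCommGroup 𝔽] [NormedSpace ℂ 𝔽]
    (q k s : ℝ) (V : Set ℂ) (f : ℂ → 𝔽) (c : ℕ → 𝔽) : Prop :=
  ∀ U : Set ℂ, (∃ d a R, 0 < a ∧ 0 < R ∧ U = bSector d a R) → closure U \ {0} ⊆ V →
    ∃ A C : ℝ, 0 < A ∧ 0 < C ∧ ∀ ε ∈ U, ∀ N : ℕ,
      ‖f ε - ∑ n ∈ Finset.range (N + 1), ε ^ n • c n‖ ≤
        C * A ^ N * (N.factorial : ℝ) ^ s * q ^ ((N : ℝ) * ((N : ℝ) + 1) / (2 * k)) *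
          ‖ε‖ ^ (N + 1)

/-- `f` admits `Σ c_n ε^n` as q-Gevrey asymptotic expansion of order `1/k` on the sector `V`. -/
def qGevrey {𝔽 : Type*} [NormedAddCommGroup 𝔽] [NormedSpace ℂ 𝔽]
    (q k : ℝ) (V : Set ℂ) (f : ℂ → 𝔽) (c : ℕ → 𝔽) : Prop :=
  ∀ U : Set ℂ, (∃ d a R, 0 < a ∧ 0 < R ∧ U = bSector d a R) → closure U \ {0} ⊆ V →
    ∃ A C : ℝ, 0 < A ∧ 0 < C ∧ ∀ ε ∈ U, ∀ N : ℕ,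
      ‖f ε - ∑ n ∈ Finset.range (N + 1), ε ^ n • c n‖ ≤
        C * A ^ (N + 1) * q ^ ((N : ℝ) * ((N : ℝ) + 1) / (2 * k)) * ‖ε‖ ^ (N + 1)

/-- The differential operator `P(∂_z)`. -/
def Dz (P : Polynomial ℂ) (f : ℂ → ℂ) (z : ℂ) : ℂ :=
  ∑ n ∈ Finset.range (P.natDegree + 1), P.coeff n * iteratedDeriv n f z

/-- The operator `t^{k+1} ∂_t`. -/
def T2op (k : ℕ) (f : ℂ → ℂ) (t : ℂ) : ℂ := t ^ (k + 1) * deriv f t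

/-! With `L = log x`, `a = k₁''λ₁²/(2 log q)` and `b = k₁'(μ₂-λ₂)k₂/log q`, taking logarithms
reduces the claim to `nL - aL² + bL log L ≤ (b/2a) log n! + 7n(n+1)/(18a)`. Comparing `log L`
with its tangent line at `L = n` turns the left side into a concave quadratic in `L`, whose
maximum `5(n + b log n)²/(18a)` is beaten by Stirling's `log n! ≥ n log n - n` once `n` is large,
since `log n = o(n)`. -/

theorem mul_log_sub_le_log_factorial (n : ℕ) : n * Real.log n - n ≤ Real.log n.factorial := by
  rcases Nat.eq_zero_or_pos n with rfl | hn
  · simp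
  have h := Stirling.le_log_factorial_stirling hn.ne'
  have : 0 ≤ Real.log n := Real.log_natCast_nonneg n
  have : 0 ≤ Real.log (2 * Real.pi) := Real.log_nonneg (by linarith [Real.pi_gt_three])
  linarith

theorem mul_log_le_of_pos {L m : ℝ} (hL : 0 < L) (hm : 0 < m) :
    L * Real.log L ≤ L * Real.log m + L ^ 2 / m - L := by
  have h := Real.log_le_sub_one_of_pos (div_pos hL hm)
  rw [Real.log_div hL.ne' hm.ne'] at h
  calc L * Real.log L = L * (Real.log L - Real.log m) + L * Real.log m := by ring
    _ ≤ L * (L / m - 1) + L * Real.log m := by gcongr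
    _ = L * Real.log m + L ^ 2 / m - L := by ring

theorem mul_sub_mul_sq_le {c d L : ℝ} (hd : 0 < d) : c * L - d * L ^ 2 ≤ c ^ 2 / (4 * d) := by
  rw [le_div_iff₀ (by positivity)]
  nlinarith [sq_nonneg (c - 2 * d * L)]

theorem mul_sub_sq_add_mul_log_le {a b m L : ℝ} (ha : 0 < a) (hb : 0 ≤ b) (hm : 0 < m)
    (hbm : 10 * b / a ≤ m) (hL : 0 < L) :
    m * L - a * L ^ 2 + b * L * Real.log L ≤ 5 * (m + b * Real.log m) ^ 2 / (18 * a) := by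
  have hb_div : b / m ≤ a / 10 := by
    rw [div_le_iff₀ ha] at hbm
    rw [div_le_iff₀ hm]
    linarith
  have hlog : b * L * Real.log L ≤ b * L * Real.log m + a / 10 * L ^ 2 := by
    calc b * L * Real.log L = b * (L * Real.log L) := by ring
      _ ≤ b * (L * Real.log m + L ^ 2 / m - L) := by gcongr; exact mul_log_le_of_pos hL hm
      _ = b * L * Real.log m + b / m * L ^ 2 - b * L := by ring
      _ ≤ b * L * Real.log m + a / 10 * L ^ 2 := by
        have : 0 ≤ b * L := by positivity
        nlinarith [mul_le_mul_of_nonneg_right hb_div (sq_nonneg L)]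
  calc m * L - a * L ^ 2 + b * L * Real.log L
      ≤ (m + b * Real.log m) * L - 9 * a / 10 * L ^ 2 := by linarith
    _ ≤ (m + b * Real.log m) ^ 2 / (4 * (9 * a / 10)) := mul_sub_mul_sq_le (by positivity)
    _ = 5 * (m + b * Real.log m) ^ 2 / (18 * a) := by field_simp; ring

theorem eventually_sq_add_mul_log_le (b : ℝ) :
    ∀ᶠ m : ℝ in atTop,
      5 * (m + b * Real.log m) ^ 2 ≤ 9 * b * (m * Real.log m - m) + 7 * m * (m + 1) := by
  have hlog : (fun m : ℝ => m * Real.log m) =o[atTop] fun m => m ^ 2 :=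
    ((Asymptotics.isBigO_refl _ _).mul_isLittleO Real.isLittleO_log_id_atTop).congr_right
      fun m => (sq m).symm
  have hlog_sq : (fun m : ℝ => Real.log m ^ 2) =o[atTop] fun m => m ^ 2 :=
    Real.isLittleO_log_id_atTop.pow two_pos
  have hid : (fun m : ℝ => m) =o[atTop] fun m => m ^ 2 := by
    simpa only [pow_one] using Asymptotics.isLittleO_pow_pow_atTop_of_lt (𝕜 := ℝ) one_lt_two
  have hsmall := ((hlog.const_mul_left b).add (hlog_sq.const_mul_left (5 * b ^ 2))).add
    (hid.const_mul_left (9 * b))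
  filter_upwards [hsmall.bound two_pos, eventually_ge_atTop 0] with m hm hm_nonneg
  simp only [Real.norm_eq_abs, abs_of_nonneg (sq_nonneg m)] at hm
  nlinarith [le_abs_self (b * (m * Real.log m) + 5 * b ^ 2 * Real.log m ^ 2 + 9 * b * m)]

theorem eventually_mul_sub_sq_add_mul_log_le {a b : ℝ} (ha : 0 < a) (hb : 0 ≤ b) :
    ∀ᶠ n : ℕ in atTop, ∀ L > 0,
      n * L - a * L ^ 2 + b * L * Real.log L ≤
        b / (2 * a) * Real.log n.factorial + 7 * ((n : ℝ) * (n + 1)) / (18 * a) := by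
  have h := (eventually_sq_add_mul_log_le b).and (eventually_ge_atTop (max (10 * b / a) 1))
  filter_upwards [tendsto_natCast_atTop_atTop.eventually h] with n ⟨hsq, hn⟩ L hL
  have hn_pos : (0 : ℝ) < n := by linarith [le_max_right (10 * b / a) 1]
  have hfact := mul_le_mul_of_nonneg_left (mul_log_sub_le_log_factorial n)
    (by positivity : 0 ≤ b / (2 * a))
  calc n * L - a * L ^ 2 + b * L * Real.log L
      ≤ 5 * (n + b * Real.log n) ^ 2 / (18 * a) :=
        mul_sub_sq_add_mul_log_le ha hb hn_pos (le_of_max_le_left hn) hL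
    _ ≤ (9 * b * (n * Real.log n - n) + 7 * n * (n + 1)) / (18 * a) := by gcongr
    _ = b / (2 * a) * (n * Real.log n - n) + 7 * ((n : ℝ) * (n + 1)) / (18 * a) := by
        field_simp; ring
    _ ≤ b / (2 * a) * Real.log n.factorial + 7 * ((n : ℝ) * (n + 1)) / (18 * a) := by
        linarith

theorem lambert_bound_general (q k₁' k₁'' k₂ lam₁ lam₂ μ₂ : ℝ) (hq : 1 < q)
    (hk₁' : 0 < k₁') (hk₁'' : 0 < k₁'') (hk₂ : 0 < k₂) (hlam₁ : 0 < lam₁)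
    (hμ₂ : lam₂ < μ₂) :
    ∃ C A : ℝ, 0 < C ∧ 0 < A ∧ ∃ n₀ : ℕ, 1 ≤ n₀ ∧
      ∀ n : ℕ, n₀ ≤ n → ∀ x : ℝ, 1 < x →
        x ^ (n : ℝ) *
          Real.exp (-(k₁'' * lam₁ ^ 2 / (2 * Real.log q)) * Real.log x ^ 2
            + (k₁' * (μ₂ - lam₂) * k₂ / Real.log q) * Real.log x * Real.log (Real.log x)) ≤
        C * A ^ n * (n.factorial : ℝ) ^ (k₁' * (μ₂ - lam₂) * k₂ / (k₁'' * lam₁ ^ 2)) *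
          q ^ ((n : ℝ) * ((n : ℝ) + 1) / (9 * k₁'' * lam₁ ^ 2 / 7)) := by
  set a := k₁'' * lam₁ ^ 2 / (2 * Real.log q)
  set b := k₁' * (μ₂ - lam₂) * k₂ / Real.log q
  have hlog_q : 0 < Real.log q := Real.log_pos hq
  have ha : 0 < a := by positivity
  have hb : 0 ≤ b := by have := sub_pos.2 hμ₂; positivity
  obtain ⟨n₀, hn₀⟩ := eventually_atTop.1 (eventually_mul_sub_sq_add_mul_log_le ha hb)
  refine ⟨1, 1, one_pos, one_pos, max n₀ 1, le_max_right _ _, fun n hn x hx => ?_⟩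
  have hS : k₁' * (μ₂ - lam₂) * k₂ / (k₁'' * lam₁ ^ 2) = b / (2 * a) := by
    simp only [a, b]; field_simp
  have hK : Real.log q * ((n : ℝ) * (n + 1) / (9 * k₁'' * lam₁ ^ 2 / 7)) =
      7 * ((n : ℝ) * (n + 1)) / (18 * a) := by
    simp only [a]; field_simp; ring
  have key := hn₀ n (le_of_max_le_left hn) (Real.log x) (Real.log_pos hx)
  rw [one_pow, one_mul, one_mul, hS, Real.rpow_def_of_pos (by linarith),
    Real.rpow_def_of_pos (by positivity), Real.rpow_def_of_pos (by linarith),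
    ← Real.exp_add, ← Real.exp_add, Real.exp_le_exp, hK]
  linarith

/-- Lemma on the function `Ψ(x) = xⁿ exp(-(k₁''λ₁²/(2 log q)) log²x
+ (k₁'(μ₂-λ₂)k₂/log q) log x · log log x)`: bounds of `((q,K);S)`-Gevrey type. -/
theorem lambert_bound (q k₁' k₁'' k₂ lam₁ lam₂ μ₂ : ℝ) (hq : 1 < q)
    (hk₁' : 0 < k₁') (hk₁'' : 0 < k₁'') (hk₂ : 0 < k₂) (hlam₁ : 0 < lam₁)
    (hlam₂ : 0 < lam₂) (hμ₂ : lam₂ < μ₂) :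
    ∃ C A : ℝ, 0 < C ∧ 0 < A ∧ ∃ n₀ : ℕ, 1 ≤ n₀ ∧
      ∀ n : ℕ, n₀ ≤ n → ∀ x : ℝ, 1 < x →
        x ^ (n : ℝ) *
          Real.exp (-(k₁'' * lam₁ ^ 2 / (2 * Real.log q)) * Real.log x ^ 2
            + (k₁' * (μ₂ - lam₂) * k₂ / Real.log q) * Real.log x * Real.log (Real.log x)) ≤
        C * A ^ n * (n.factorial : ℝ) ^ (k₁' * (μ₂ - lam₂) * k₂ / (k₁'' * lam₁ ^ 2)) *
          q ^ ((n : ℝ) * ((n : ℝ) + 1) / (9 * k₁'' * lam₁ ^ 2 / 7)) :=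
  lambert_bound_general q k₁' k₁'' k₂ lam₁ lam₂ μ₂ hq hk₁' hk₁'' hk₂ hlam₁ hμ₂
end
end

section
/- Let μ > 1, β > 0 and f ∈ E_{(β,μ)}. Then: (1) the inverse Fourier transform 𝓕^{−1}(f)(x) = (2π)^{−1/2} ∫_{−∞}^{∞} f(m) e^{ixm} dm, defined for x ∈ ℝ, extends to a holomorphic function on the horizontal strip H_β = {z ∈ ℂ : |Im z| < β}; (2) the function φ(m) = i m f(m) belongs to E_{(β,μ−1)} and ∂_z 𝓕^{−1}(f)(z) = 𝓕^{−1}(φ)(z) for all z ∈ H_β; (3) for f, g ∈ E_{(β,μ)}, the convolution ψ(m) = (2π)^{−1/2} ∫_{−∞}^{∞} f(m−m₁) g(m₁) dm₁ belongs to E_{(β,μ)}, and 𝓕^{−1}(f)(z) · 𝓕^{−1}(g)(z) = 𝓕^{−1}(ψ)(z) for every z ∈ H_β. -/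
open Complex MeasureTheory Set Metric Filter

noncomputable section

/-- Inverse Fourier transform `𝓕⁻¹(f)(z) = (2π)^{-1/2} ∫ f(m) e^{izm} dm`. -/
def Finv (f : ℝ → ℂ) (z : ℂ) : ℂ :=
  ((1 / Real.sqrt (2 * Real.pi) : ℝ) : ℂ) *
    ∫ m : ℝ, f m * Complex.exp (Complex.I * z * (m : ℂ))


/-! For `|Im z| ≤ b < β` the integrand `f m * exp (i z m)` is bounded by `C e^{-(β - b)|m|}`
uniformly in `z`, and so is its `z`-derivative `i m f m * exp (i z m)`, because `m f m` still
decays like `e^{-β|m|}`; differentiating under the integral sign gives holomorphy on the strip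
and the derivative formula.

Multiplication by the character `m ↦ exp (i z m)` commutes with convolution, and the integral
of a convolution is the product of the integrals: this is the product formula. The weighted
bound on the convolution comes from `(1 + |x + y|)^μ ≤ 2^μ ((1 + |x|)^μ + (1 + |y|)^μ)` and
`e^{β|x + y|} ≤ e^{β|x|} e^{β|y|}`, which leave one factor `(1 + |·|)^{-μ}` to integrate,
and this is where `μ > 1` enters. -/

open Real ContinuousLinearMap
open scoped Convolution

section Weight

variable {β β' μ μ' : ℝ}

lemma Eweight_pos (β μ m : ℝ) : 0 < Eweight β μ m := by
  unfold Eweight; positivity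

lemma Eweight_mono (hβ : β ≤ β') (hμ : μ ≤ μ') (m : ℝ) :
    Eweight β μ m ≤ Eweight β' μ' m :=
  mul_le_mul (rpow_le_rpow_of_exponent_le (by linarith [abs_nonneg m]) hμ)
    (exp_le_exp.2 (mul_le_mul_of_nonneg_right hβ (abs_nonneg m))) (exp_pos _).le
    (by positivity)

lemma one_le_Eweight (hβ : 0 ≤ β) (hμ : 0 ≤ μ) (m : ℝ) : 1 ≤ Eweight β μ m := by
  simpa [Eweight] using Eweight_mono hβ hμ m

lemma le_mul_inv_Eweight {m x C : ℝ} (h : Eweight β μ m * x ≤ C) :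
    x ≤ C * (Eweight β μ m)⁻¹ := by
  rwa [← div_eq_mul_inv, le_div_iff₀' (Eweight_pos β μ m)]

lemma Eweight_sub_mul_exp (b m : ℝ) :
    Eweight (β - b) μ m * rexp (b * |m|) = Eweight β μ m := by
  simp only [Eweight, mul_assoc, ← Real.exp_add, sub_mul, sub_add_cancel]

lemma Eweight_sub_one_mul_abs_le (m : ℝ) : Eweight β (μ - 1) m * |m| ≤ Eweight β μ m := by
  have h : (1 + |m|) ^ (μ - 1) * (1 + |m|) = (1 + |m|) ^ μ := by
    rw [← rpow_add_one (by positivity)]; ring_nf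
  calc Eweight β (μ - 1) m * |m| ≤ Eweight β (μ - 1) m * (1 + |m|) :=
        mul_le_mul_of_nonneg_left (by linarith) (Eweight_pos _ _ _).le
    _ = Eweight β μ m := by rw [Eweight, Eweight, ← h]; ring

lemma Eweight_add_le (hβ : 0 ≤ β) (hμ : 0 ≤ μ) (x y : ℝ) :
    Eweight β μ (x + y) ≤
      2 ^ μ * (Eweight β μ x * rexp (β * |y|) + rexp (β * |x|) * Eweight β μ y) := by
  have hpoly : (1 + |x + y|) ^ μ ≤ 2 ^ μ * ((1 + |x|) ^ μ + (1 + |y|) ^ μ) := by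
    rcases le_total |x| |y| with h | h
    · calc (1 + |x + y|) ^ μ ≤ (2 * (1 + |y|)) ^ μ := by
            gcongr; linarith [abs_add_le x y]
        _ ≤ 2 ^ μ * ((1 + |x|) ^ μ + (1 + |y|) ^ μ) := by
            rw [mul_rpow (by norm_num) (by positivity)]
            gcongr; exact le_add_of_nonneg_left (by positivity)
    · calc (1 + |x + y|) ^ μ ≤ (2 * (1 + |x|)) ^ μ := by
            gcongr; linarith [abs_add_le x y]
        _ ≤ 2 ^ μ * ((1 + |x|) ^ μ + (1 + |y|) ^ μ) := by
            rw [mul_rpow (by norm_num) (by positivity)]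
            gcongr; exact le_add_of_nonneg_right (by positivity)
  have hexp : rexp (β * |x + y|) ≤ rexp (β * |x|) * rexp (β * |y|) := by
    rw [← Real.exp_add, ← mul_add]; gcongr; exact abs_add_le x y
  calc Eweight β μ (x + y) ≤ 2 ^ μ * ((1 + |x|) ^ μ + (1 + |y|) ^ μ) *
        (rexp (β * |x|) * rexp (β * |y|)) := by
        unfold Eweight; gcongr
    _ = _ := by unfold Eweight; ring

lemma integrable_exp_neg_mul_abs {a : ℝ} (ha : 0 < a) :
    Integrable fun x : ℝ => rexp (-(a * |x|)) := by
  have hg : Integrable ((Ici 0).indicator fun x : ℝ => rexp (-a * x)) :=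
    (integrable_indicator_iff measurableSet_Ici).2
      ((integrableOn_Ici_iff_integrableOn_Ioi).2 (exp_neg_integrableOn_Ioi 0 ha))
  refine (hg.add hg.comp_neg).mono' (by fun_prop) (ae_of_all _ fun x => ?_)
  have hg_nonneg (y : ℝ) : 0 ≤ (Ici 0).indicator (fun x : ℝ => rexp (-a * x)) y :=
    indicator_nonneg (fun _ _ => (exp_pos _).le) y
  rw [Pi.add_apply, norm_of_nonneg (exp_pos _).le]
  rcases le_total 0 x with hx | hx
  · rw [indicator_of_mem (mem_Ici.2 hx), abs_of_nonneg hx, neg_mul]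
    exact le_add_of_nonneg_right (hg_nonneg _)
  · rw [indicator_of_mem (mem_Ici.2 (neg_nonneg.2 hx)), abs_of_nonpos hx, neg_mul, mul_neg]
    exact le_add_of_nonneg_left (hg_nonneg _)

lemma integrable_inv_Eweight (hβ : 0 ≤ β) (hμ : 0 ≤ μ) (h : 0 < β ∨ 1 < μ) :
    Integrable fun m => (Eweight β μ m)⁻¹ := by
  have hmono (β₀ μ₀ : ℝ) (hβ₀ : β₀ ≤ β) (hμ₀ : μ₀ ≤ μ)
      (h₀ : Integrable fun m => (Eweight β₀ μ₀ m)⁻¹) :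
      Integrable fun m => (Eweight β μ m)⁻¹ :=
    h₀.mono'
      (by unfold Eweight; fun_prop : Measurable fun m => (Eweight β μ m)⁻¹).aestronglyMeasurable
      (ae_of_all _ fun m => by
        rw [norm_inv, norm_of_nonneg (Eweight_pos _ _ _).le]
        exact inv_anti₀ (Eweight_pos _ _ _) (Eweight_mono hβ₀ hμ₀ m))
  rcases h with hβ | hμ
  · refine hmono β 0 le_rfl hμ ((integrable_exp_neg_mul_abs hβ).congr (ae_of_all _ fun m => ?_))
    simp [Eweight, Real.exp_neg]
  · refine hmono 0 μ hβ le_rfl ((integrable_one_add_norm (E := ℝ) (by simpa using hμ)).congr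
      (ae_of_all _ fun m => ?_))
    simp [Eweight, rpow_neg (by positivity : (0 : ℝ) ≤ 1 + |m|)]

end Weight

namespace memE

variable {β μ ν : ℝ} {h : ℝ → ℂ}

lemma mono (hνμ : ν ≤ μ) (hh : memE β μ h) : memE β ν h := by
  obtain ⟨hc, C, hC⟩ := hh
  exact ⟨hc, C, fun m => (mul_le_mul_of_nonneg_right (Eweight_mono le_rfl hνμ m)
    (norm_nonneg _)).trans (hC m)⟩

lemma const_mul (c : ℂ) (hh : memE β μ h) : memE β μ fun m => c * h m := by
  obtain ⟨hc, C, hC⟩ := hh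
  refine ⟨continuous_const.mul hc, ‖c‖ * C, fun m => ?_⟩
  rw [norm_mul, mul_left_comm]
  exact mul_le_mul_of_nonneg_left (hC m) (norm_nonneg c)

lemma I_mul_ofReal_mul (hh : memE β μ h) :
    memE β (μ - 1) fun m => I * (m : ℂ) * h m := by
  obtain ⟨hc, C, hC⟩ := hh
  refine ⟨by fun_prop, C, fun m => ?_⟩
  calc Eweight β (μ - 1) m * ‖I * (m : ℂ) * h m‖
      = Eweight β (μ - 1) m * |m| * ‖h m‖ := by simp [mul_assoc]
    _ ≤ Eweight β μ m * ‖h m‖ :=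
        mul_le_mul_of_nonneg_right (Eweight_sub_one_mul_abs_le m) (norm_nonneg _)
    _ ≤ C := hC m

lemma integrable (hw : Integrable fun m => (Eweight β μ m)⁻¹) (hh : memE β μ h) :
    Integrable h := by
  obtain ⟨hc, C, hC⟩ := hh
  exact (hw.const_mul C).mono' hc.aestronglyMeasurable
    (ae_of_all _ fun m => le_mul_inv_Eweight (hC m))

lemma bddAbove_norm (hβ : 0 ≤ β) (hμ : 0 ≤ μ) (hh : memE β μ h) :
    BddAbove (range fun m => ‖h m‖) := by
  obtain ⟨-, C, hC⟩ := hh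
  refine ⟨C, ?_⟩
  rintro _ ⟨m, rfl⟩
  exact (le_mul_of_one_le_left (norm_nonneg _) (one_le_Eweight hβ hμ m)).trans (hC m)

end memE

lemma norm_cexp_I_mul_le (z : ℂ) (m : ℝ) : ‖cexp (I * z * m)‖ ≤ rexp (|z.im| * |m|) := by
  rw [Complex.norm_exp]
  refine Real.exp_le_exp.2 ?_
  have : (I * z * m).re = -(z.im * m) := by simp
  rw [this, ← abs_mul]
  exact neg_le_abs _

lemma Eweight_mul_norm_mul_cexp_le {β μ C b : ℝ} {h : ℝ → ℂ}
    (hC : ∀ m, Eweight β μ m * ‖h m‖ ≤ C) {z : ℂ} (hz : |z.im| ≤ b) (m : ℝ) :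
    Eweight (β - b) μ m * ‖h m * cexp (I * z * m)‖ ≤ C :=
  calc Eweight (β - b) μ m * ‖h m * cexp (I * z * m)‖
      ≤ Eweight (β - b) μ m * (‖h m‖ * rexp (b * |m|)) := by
        rw [norm_mul]
        gcongr
        · exact (Eweight_pos _ _ _).le
        · exact (norm_cexp_I_mul_le z m).trans (by gcongr)
    _ = Eweight β μ m * ‖h m‖ := by rw [← Eweight_sub_mul_exp (β := β) b m]; ring
    _ ≤ C := hC m

lemma memE.mul_cexp {β μ : ℝ} {h : ℝ → ℂ} (hh : memE β μ h) (z : ℂ) :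
    memE (β - |z.im|) μ fun m => h m * cexp (I * z * m) := by
  obtain ⟨hc, C, hC⟩ := hh
  exact ⟨by fun_prop, C, Eweight_mul_norm_mul_cexp_le hC le_rfl⟩

lemma hasDerivAt_mul_cexp_I_mul (c : ℂ) (m : ℝ) (z : ℂ) :
    HasDerivAt (fun z => c * cexp (I * z * m)) (I * m * c * cexp (I * z * m)) z := by
  have h := (((hasDerivAt_id z).const_mul I).mul_const (m : ℂ)).cexp.const_mul c
  simp only [id, mul_one] at h
  exact h.congr_deriv (by ring)

lemma abs_im_le_of_mem_ball {z₀ z : ℂ} {ε : ℝ} (hz : z ∈ ball z₀ ε) :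
    |z.im| ≤ |z₀.im| + ε := by
  have := abs_sub_abs_le_abs_sub z.im z₀.im
  have := (Complex.abs_im_le_norm (z - z₀)).trans (mem_ball_iff_norm.1 hz).le
  simp only [Complex.sub_im] at this
  linarith

theorem hasDerivAt_Finv {β : ℝ} {f : ℝ → ℂ} (hf : memE β 0 f)
    (hφ : memE β 0 fun m => I * m * f m) {z₀ : ℂ} (hz₀ : |z₀.im| < β) :
    HasDerivAt (Finv f) (Finv (fun m => I * m * f m) z₀) z₀ := by
  obtain ⟨hφc, C, hC⟩ := hφ
  obtain ⟨b, hz₀b, hbβ⟩ := exists_between hz₀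
  have him (z : ℂ) (hz : z ∈ ball z₀ (b - |z₀.im|)) : |z.im| ≤ b := by
    simpa using abs_im_le_of_mem_ball hz
  have key := hasDerivAt_integral_of_dominated_loc_of_deriv_le (μ := volume)
    (F' := fun z m => I * m * f m * cexp (I * z * m)) (ball_mem_nhds z₀ (sub_pos.2 hz₀b))
    (.of_forall fun z => (hf.mul_cexp z).1.aestronglyMeasurable)
    ((hf.mul_cexp z₀).integrable
      (integrable_inv_Eweight (sub_nonneg.2 hz₀.le) le_rfl (.inl (sub_pos.2 hz₀))))
    (hφc.mul (by fun_prop)).aestronglyMeasurable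
    (ae_of_all _ fun m z hz => le_mul_inv_Eweight (Eweight_mul_norm_mul_cexp_le hC (him z hz) m))
    ((integrable_inv_Eweight (sub_nonneg.2 hbβ.le) le_rfl (.inl (sub_pos.2 hbβ))).const_mul C)
    (ae_of_all _ fun m z _ => hasDerivAt_mul_cexp_I_mul (f m) m z)
  exact key.2.const_mul _

lemma exp_mul_norm_le {β μ C : ℝ} {h : ℝ → ℂ} (hC : ∀ m, Eweight β μ m * ‖h m‖ ≤ C)
    (m : ℝ) :
    rexp (β * |m|) * ‖h m‖ ≤ C * (1 + |m|) ^ (-μ) := by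
  have hpos : (0 : ℝ) < (1 + |m|) ^ μ := by positivity
  rw [rpow_neg (by positivity), ← div_eq_mul_inv, le_div_iff₀' hpos, ← mul_assoc]
  exact hC m

lemma Eweight_mul_norm_mul_le {β μ Cf Cg : ℝ} (hβ : 0 ≤ β) (hμ : 0 ≤ μ) {f g : ℝ → ℂ}
    (hf : ∀ m, Eweight β μ m * ‖f m‖ ≤ Cf) (hg : ∀ m, Eweight β μ m * ‖g m‖ ≤ Cg)
    (x y : ℝ) :
    Eweight β μ (x + y) * ‖f x * g y‖ ≤
      2 ^ μ * Cf * Cg * ((1 + |x|) ^ (-μ) + (1 + |y|) ^ (-μ)) := by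
  have hCf : 0 ≤ Cf := (mul_nonneg (Eweight_pos β μ 0).le (norm_nonneg _)).trans (hf 0)
  have hCg : 0 ≤ Cg := (mul_nonneg (Eweight_pos β μ 0).le (norm_nonneg _)).trans (hg 0)
  rw [norm_mul]
  calc Eweight β μ (x + y) * (‖f x‖ * ‖g y‖)
      ≤ 2 ^ μ * (Eweight β μ x * rexp (β * |y|) + rexp (β * |x|) * Eweight β μ y) *
          (‖f x‖ * ‖g y‖) := by gcongr; exact Eweight_add_le hβ hμ x y
    _ = 2 ^ μ * ((Eweight β μ x * ‖f x‖) * (rexp (β * |y|) * ‖g y‖) +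
          (rexp (β * |x|) * ‖f x‖) * (Eweight β μ y * ‖g y‖)) := by ring
    _ ≤ 2 ^ μ * (Cf * (Cg * (1 + |y|) ^ (-μ)) + (Cf * (1 + |x|) ^ (-μ)) * Cg) := by
        gcongr 2 ^ μ * (?_ + ?_)
        · exact mul_le_mul (hf x) (exp_mul_norm_le hg y) (by positivity) hCf
        · exact mul_le_mul (exp_mul_norm_le hf x) (hg y)
            (mul_nonneg (Eweight_pos β μ y).le (norm_nonneg _)) (mul_nonneg hCf (by positivity))
    _ = _ := by ring

theorem memE.convolution {β μ : ℝ} (hβ : 0 ≤ β) (hμ : 1 < μ) {f g : ℝ → ℂ}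
    (hf : memE β μ f) (hg : memE β μ g) : memE β μ (f ⋆[mul ℂ ℂ] g) := by
  have hw : Integrable fun t : ℝ => (1 + |t|) ^ (-μ) := by
    simpa using integrable_one_add_norm (E := ℝ) (by simpa using hμ)
  have hcont := (hf.bddAbove_norm hβ (by linarith)).continuous_convolution_left_of_integrable
    (mul ℂ ℂ) hf.1 (hg.integrable (integrable_inv_Eweight hβ (by linarith) (.inr hμ)))
  obtain ⟨-, Cf, hCf⟩ := hf
  obtain ⟨-, Cg, hCg⟩ := hg
  refine ⟨hcont, 2 ^ μ * Cf * Cg * (2 * ∫ t, (1 + |t|) ^ (-μ)), fun m => ?_⟩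
  have hbound : Integrable fun t =>
      2 ^ μ * Cf * Cg * ((1 + |m - t|) ^ (-μ) + (1 + |t|) ^ (-μ)) / Eweight β μ m :=
    (((hw.comp_sub_left m).add hw).const_mul _).div_const _
  rw [convolution_mul_swap, ← le_div_iff₀' (Eweight_pos β μ m)]
  calc ‖∫ t, f (m - t) * g t‖
      ≤ ∫ t, 2 ^ μ * Cf * Cg * ((1 + |m - t|) ^ (-μ) + (1 + |t|) ^ (-μ)) / Eweight β μ m :=
        norm_integral_le_of_norm_le hbound (ae_of_all _ fun t => by
          rw [le_div_iff₀' (Eweight_pos β μ m)]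
          simpa using Eweight_mul_norm_mul_le hβ (by linarith) hCf hCg (m - t) t)
    _ = _ := by
        rw [integral_div, integral_const_mul, integral_add (hw.comp_sub_left m) hw,
          integral_sub_left_eq_self (fun t => (1 + |t|) ^ (-μ))]
        ring

lemma convolution_mul_cexp (f g : ℝ → ℂ) (z : ℂ) (m : ℝ) :
    (f ⋆[mul ℂ ℂ] g) m * cexp (I * z * m) =
      ((fun t => f t * cexp (I * z * t)) ⋆[mul ℂ ℂ] fun t => g t * cexp (I * z * t)) m := by
  simp only [convolution_mul, ← integral_mul_const]
  congr 1 with t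
  have : cexp (I * z * m) = cexp (I * z * t) * cexp (I * z * ↑(m - t)) := by
    rw [← Complex.exp_add]; push_cast; ring_nf
  rw [this]; ring

theorem Finv_mul_Finv {β : ℝ} {f g : ℝ → ℂ} (hf : memE β 0 f) (hg : memE β 0 g) {z : ℂ}
    (hz : |z.im| < β) :
    Finv f z * Finv g z =
      Finv (fun m => ((1 / Real.sqrt (2 * Real.pi) : ℝ) : ℂ) * (f ⋆[mul ℂ ℂ] g) m) z := by
  have hw := integrable_inv_Eweight (μ := 0) (sub_nonneg.2 hz.le) le_rfl (.inl (sub_pos.2 hz))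
  simp only [Finv]
  set c : ℂ := ((1 / Real.sqrt (2 * Real.pi) : ℝ) : ℂ)
  simp_rw [mul_assoc c, convolution_mul_cexp]
  rw [integral_const_mul, integral_convolution (mul ℂ ℂ) ((hf.mul_cexp z).integrable hw)
    ((hg.mul_cexp z).integrable hw), mul_apply']
  ring

/-- Properties of the inverse Fourier transform on `E_{(β,μ)}`:
analytic extension to the strip `H_β`, derivative, and convolution. -/
theorem inverse_fourier_props (β μ : ℝ) (hβ : 0 < β) (hμ : 1 < μ)
    (f : ℝ → ℂ) (hf : memE β μ f) :
    DifferentiableOn ℂ (Finv f) (HStrip β) ∧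
    (memE β (μ - 1) (fun m => Complex.I * (m : ℂ) * f m) ∧
      ∀ z ∈ HStrip β, deriv (Finv f) z = Finv (fun m => Complex.I * (m : ℂ) * f m) z) ∧
    (∀ g : ℝ → ℂ, memE β μ g →
      memE β μ (fun m => ((1 / Real.sqrt (2 * Real.pi) : ℝ) : ℂ) *
        ∫ m₁ : ℝ, f (m - m₁) * g m₁) ∧
      ∀ z ∈ HStrip β, Finv f z * Finv g z =
        Finv (fun m => ((1 / Real.sqrt (2 * Real.pi) : ℝ) : ℂ) *
          ∫ m₁ : ℝ, f (m - m₁) * g m₁) z) := by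
  have hφ := hf.I_mul_ofReal_mul
  have hderiv (z : ℂ) (hz : z ∈ HStrip β) :
      HasDerivAt (Finv f) (Finv (fun m => I * m * f m) z) z :=
    hasDerivAt_Finv (hf.mono (by linarith)) (hφ.mono (by linarith)) hz
  refine ⟨fun z hz => (hderiv z hz).differentiableAt.differentiableWithinAt,
    ⟨hφ, fun z hz => (hderiv z hz).deriv⟩, fun g hg => ?_⟩
  simp_rw [← convolution_mul_swap]
  exact ⟨(hf.convolution hβ.le hμ hg).const_mul _,
    fun z hz => Finv_mul_Finv (hf.mono (by linarith)) (hg.mono (by linarith)) hz⟩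
end
end
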